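/- Let $a \in (0,1)$ and let $k_1, k_2$ be nonzero real numbers (possibly of different signs). Then for all continuous functions $f_1 : [0,a] \to \mathbb{R}$ and $f_2 : [a,1] \to \mathbb{R}$ there exists a unique pair of twice continuously differentiable functions $\psi_1 : [0,a] \to \mathbb{R}$ and $\psi_2 : [a,1] \to \mathbb{R}$ satisfying: $-k_1 \psi_1'' = f_1$ on $[0,a]$; $-k_2 \psi_2'' = f_2$ on $[a,1]$; the transmission conditions $\psi_1(a) = \psi_2(a)$ and $k_1 \psi_1'(a) = k_2 \psi_2'(a)$; and the external boundary conditions $\psi_1(0) = 0$ and $\psi_2'(1) = 0$. -/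

import Mathlib

/-!
The Neumann condition at `x = 1` fixes `ψ₂'` on `[a, 1]` from the equation `-k₂ ψ₂'' = f₂`;
the flux condition `k₁ ψ₁'(a) = k₂ ψ₂'(a)` then fixes `ψ₁'(a)`, hence `ψ₁'` on `[0, a]`; the
Dirichlet condition fixes `ψ₁`, and continuity at `a` fixes `ψ₂`. Each step is an initial value
problem for `ψ'' = g`, which only requires dividing by `k₁` and `k₂`, so their signs are
irrelevant. The same chain, run from `x = 1` back to `x = 0`, builds the solution.
-/

open Set intervalIntegral

/-- Classical solution of the two-material interval problem: `ψ₁` on `[0,a]` with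
conductivity `k₁`, `ψ₂` on `[a,1]` with conductivity `k₂`, transmission conditions at
`x = a`, Dirichlet condition at `x = 0` and Neumann condition at `x = 1`. -/
def IsIntervalSolution (a k₁ k₂ : ℝ) (f₁ f₂ : ℝ → ℝ) (ψ₁ ψ₂ : ℝ → ℝ) : Prop :=
  ContDiffOn ℝ 2 ψ₁ (Set.Icc 0 a) ∧ ContDiffOn ℝ 2 ψ₂ (Set.Icc a 1) ∧
  (∀ x ∈ Set.Icc (0 : ℝ) a, -(k₁ * iteratedDerivWithin 2 ψ₁ (Set.Icc 0 a) x) = f₁ x) ∧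
  (∀ x ∈ Set.Icc a (1 : ℝ), -(k₂ * iteratedDerivWithin 2 ψ₂ (Set.Icc a 1) x) = f₂ x) ∧
  ψ₁ a = ψ₂ a ∧
  k₁ * derivWithin ψ₁ (Set.Icc 0 a) a = k₂ * derivWithin ψ₂ (Set.Icc a 1) a ∧
  ψ₁ 0 = 0 ∧
  derivWithin ψ₂ (Set.Icc a 1) 1 = 0

section Uniqueness

variable {F : Type*} [NormedAddCommGroup F] [NormedSpace ℝ F] {f g : ℝ → F} {s : Set ℝ} {x : ℝ}

theorem eqOn_of_derivWithin_eq (hs : Convex ℝ s) (hs' : UniqueDiffOn ℝ s)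
    (hf : DifferentiableOn ℝ f s) (hg : DifferentiableOn ℝ g s)
    (h' : EqOn (derivWithin f s) (derivWithin g s) s) (hx : x ∈ s) (hfg : f x = g x) :
    EqOn f g s :=
  hs.eqOn_of_fderivWithin_eq hf hg hs'
    (fun y hy => by rw [← toSpanSingleton_derivWithin, ← toSpanSingleton_derivWithin, h' hy])
    hx hfg

theorem eqOn_derivWithin_of_iteratedDerivWithin_two_eq (hs : Convex ℝ s)
    (hs' : UniqueDiffOn ℝ s) (hf : ContDiffOn ℝ 2 f s) (hg : ContDiffOn ℝ 2 g s)
    (h'' : EqOn (iteratedDerivWithin 2 f s) (iteratedDerivWithin 2 g s) s) (hx : x ∈ s)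
    (h' : derivWithin f s x = derivWithin g s x) :
    EqOn (derivWithin f s) (derivWithin g s) s :=
  eqOn_of_derivWithin_eq hs hs' (hf.derivWithin hs' (m := 1) le_rfl).differentiableOn_one
    (hg.derivWithin hs' (m := 1) le_rfl).differentiableOn_one
    (fun y hy => by simpa only [iteratedDerivWithin_succ, iteratedDerivWithin_zero] using h'' hy)
    hx h'

end Uniqueness

section SecondPrimitive

variable {E : Type*} [NormedAddCommGroup E] [NormedSpace ℝ E] {g : ℝ → E}
  {c d x : ℝ} {y₀ v₀ : E} {s : Set ℝ}

/-- The solution of `u'' = g` with `u c = y₀` and `u' d = v₀`. -/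
noncomputable def secondPrimitive (g : ℝ → E) (c : ℝ) (y₀ : E) (d : ℝ) (v₀ : E) (x : ℝ) : E :=
  y₀ + ∫ t in c..x, (v₀ + ∫ u in d..t, g u)

@[simp]
theorem secondPrimitive_self : secondPrimitive g c y₀ d v₀ c = y₀ := by
  simp [secondPrimitive]

variable [CompleteSpace E]

theorem hasDerivAt_const_add_integral (hg : Continuous g) (y₀ : E) (c x : ℝ) :
    HasDerivAt (fun x => y₀ + ∫ t in c..x, g t) (g x) x :=
  (integral_hasDerivAt_right (hg.intervalIntegrable _ _) (hg.stronglyMeasurableAtFilter _ _)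
    hg.continuousAt).const_add y₀

theorem hasDerivAt_secondPrimitive (hg : Continuous g) :
    HasDerivAt (secondPrimitive g c y₀ d v₀) (v₀ + ∫ u in d..x, g u) x :=
  hasDerivAt_const_add_integral
    (continuous_iff_continuousAt.2 fun t => (hasDerivAt_const_add_integral hg v₀ d t).continuousAt)
    y₀ c x

theorem contDiff_secondPrimitive (hg : Continuous g) :
    ContDiff ℝ 2 (secondPrimitive g c y₀ d v₀) := by
  rw [show (2 : WithTop ℕ∞) = 1 + 1 from rfl, contDiff_succ_iff_deriv,
    deriv_eq fun x => hasDerivAt_secondPrimitive hg, contDiff_one_iff_deriv,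
    deriv_eq (hasDerivAt_const_add_integral hg v₀ d)]
  exact ⟨fun x => (hasDerivAt_secondPrimitive hg).differentiableAt, by simp,
    fun x => (hasDerivAt_const_add_integral hg v₀ d x).differentiableAt, hg⟩

theorem derivWithin_secondPrimitive (hg : Continuous g) (hs : UniqueDiffWithinAt ℝ s x) :
    derivWithin (secondPrimitive g c y₀ d v₀) s x = v₀ + ∫ u in d..x, g u :=
  (hasDerivAt_secondPrimitive hg).hasDerivWithinAt.derivWithin hs

theorem iteratedDerivWithin_two_secondPrimitive (hg : Continuous g) (hs : UniqueDiffOn ℝ s)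
    (hx : x ∈ s) : iteratedDerivWithin 2 (secondPrimitive g c y₀ d v₀) s x = g x := by
  rw [iteratedDerivWithin_succ, iteratedDerivWithin_one,
    derivWithin_congr (fun y hy => derivWithin_secondPrimitive hg (hs y hy))
      (derivWithin_secondPrimitive hg (hs x hx))]
  exact (hasDerivAt_const_add_integral hg v₀ d x).hasDerivWithinAt.derivWithin (hs x hx)

end SecondPrimitive

theorem ContinuousOn.exists_continuous_eqOn_Icc {α β : Type*} [TopologicalSpace α]
    [LinearOrder α] [OrderTopology α] [TopologicalSpace β] {c d : α} {f : α → β} (h : c ≤ d)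
    (hf : ContinuousOn f (Icc c d)) : ∃ g : α → β, Continuous g ∧ EqOn g f (Icc c d) :=
  ⟨IccExtend h ((Icc c d).domRestrict f), hf.domRestrict.Icc_extend',
    fun _ hx => IccExtend_of_mem h _ hx⟩

theorem IsIntervalSolution.eqOn {a k₁ k₂ : ℝ} {f₁ f₂ φ₁ φ₂ ψ₁ ψ₂ : ℝ → ℝ}
    (ha : a ∈ Ioo (0 : ℝ) 1) (hk₁ : k₁ ≠ 0) (hk₂ : k₂ ≠ 0)
    (hφ : IsIntervalSolution a k₁ k₂ f₁ f₂ φ₁ φ₂) (hψ : IsIntervalSolution a k₁ k₂ f₁ f₂ ψ₁ ψ₂) :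
    EqOn φ₁ ψ₁ (Icc 0 a) ∧ EqOn φ₂ ψ₂ (Icc a 1) := by
  obtain ⟨hφ₁, hφ₂, hφ₁'', hφ₂'', hφa, hφa', hφ0, hφ1'⟩ := hφ
  obtain ⟨hψ₁, hψ₂, hψ₁'', hψ₂'', hψa, hψa', hψ0, hψ1'⟩ := hψ
  have hU₁ := uniqueDiffOn_Icc ha.1
  have hU₂ := uniqueDiffOn_Icc ha.2
  have ha₁ : a ∈ Icc 0 a := right_mem_Icc.2 ha.1.le
  have ha₂ : a ∈ Icc a 1 := left_mem_Icc.2 ha.2.le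
  have h₂' : EqOn (derivWithin φ₂ (Icc a 1)) (derivWithin ψ₂ (Icc a 1)) (Icc a 1) :=
    eqOn_derivWithin_of_iteratedDerivWithin_two_eq (convex_Icc a 1) hU₂ hφ₂ hψ₂
      (fun x hx => mul_left_cancel₀ hk₂ (neg_injective ((hφ₂'' x hx).trans (hψ₂'' x hx).symm)))
      (right_mem_Icc.2 ha.2.le) (hφ1'.trans hψ1'.symm)
  have h₁' : EqOn (derivWithin φ₁ (Icc 0 a)) (derivWithin ψ₁ (Icc 0 a)) (Icc 0 a) :=
    eqOn_derivWithin_of_iteratedDerivWithin_two_eq (convex_Icc 0 a) hU₁ hφ₁ hψ₁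
      (fun x hx => mul_left_cancel₀ hk₁ (neg_injective ((hφ₁'' x hx).trans (hψ₁'' x hx).symm)))
      ha₁ (mul_left_cancel₀ hk₁ (by rw [hφa', hψa', h₂' ha₂]))
  have h₁ : EqOn φ₁ ψ₁ (Icc 0 a) :=
    eqOn_of_derivWithin_eq (convex_Icc 0 a) hU₁ (hφ₁.differentiableOn two_ne_zero)
      (hψ₁.differentiableOn two_ne_zero) h₁' (left_mem_Icc.2 ha.1.le) (hφ0.trans hψ0.symm)
  refine ⟨h₁, eqOn_of_derivWithin_eq (convex_Icc a 1) hU₂ (hφ₂.differentiableOn two_ne_zero)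
    (hψ₂.differentiableOn two_ne_zero) h₂' ha₂ ?_⟩
  rw [← hφa, ← hψa, h₁ ha₁]

theorem exists_isIntervalSolution {a k₁ k₂ : ℝ} {f₁ f₂ : ℝ → ℝ} (ha : a ∈ Ioo (0 : ℝ) 1)
    (hk₁ : k₁ ≠ 0) (hk₂ : k₂ ≠ 0) (hf₁ : ContinuousOn f₁ (Icc 0 a))
    (hf₂ : ContinuousOn f₂ (Icc a 1)) : ∃ ψ₁ ψ₂, IsIntervalSolution a k₁ k₂ f₁ f₂ ψ₁ ψ₂ := by
  obtain ⟨g₁, hg₁, hg₁f⟩ := (hf₁.neg.div_const k₁).exists_continuous_eqOn_Icc ha.1.le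
  obtain ⟨g₂, hg₂, hg₂f⟩ := (hf₂.neg.div_const k₂).exists_continuous_eqOn_Icc ha.2.le
  have hU₁ := uniqueDiffOn_Icc ha.1
  have hU₂ := uniqueDiffOn_Icc ha.2
  set ψ₁ := secondPrimitive g₁ 0 0 a (k₂ / k₁ * ∫ t in (1 : ℝ)..a, g₂ t)
  refine ⟨ψ₁, secondPrimitive g₂ a (ψ₁ a) 1 0, (contDiff_secondPrimitive hg₁).contDiffOn,
    (contDiff_secondPrimitive hg₂).contDiffOn, fun x hx => ?_, fun x hx => ?_,
    secondPrimitive_self.symm, ?_, secondPrimitive_self, ?_⟩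
  · rw [iteratedDerivWithin_two_secondPrimitive hg₁ hU₁ hx, hg₁f hx]
    simp [mul_div_cancel₀ _ hk₁]
  · rw [iteratedDerivWithin_two_secondPrimitive hg₂ hU₂ hx, hg₂f hx]
    simp [mul_div_cancel₀ _ hk₂]
  · rw [derivWithin_secondPrimitive hg₁ (hU₁ a (right_mem_Icc.2 ha.1.le)),
      derivWithin_secondPrimitive hg₂ (hU₂ a (left_mem_Icc.2 ha.2.le)), integral_same, add_zero,
      zero_add]
    field_simp
  · rw [derivWithin_secondPrimitive hg₂ (hU₂ 1 (right_mem_Icc.2 ha.2.le))]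
    simp

/-- Well-posedness for the two-material interval with one Dirichlet and one Neumann
endpoint (Remark 3.3): the problem is well-posed for every choice of the nonzero
conductivities `k₁, k₂`, including sign-changing choices. -/
theorem stmt_8 (a : ℝ) (ha : a ∈ Set.Ioo (0 : ℝ) 1)
    (k₁ k₂ : ℝ) (hk₁ : k₁ ≠ 0) (hk₂ : k₂ ≠ 0)
    (f₁ f₂ : ℝ → ℝ)
    (hf₁ : ContinuousOn f₁ (Set.Icc 0 a)) (hf₂ : ContinuousOn f₂ (Set.Icc a 1)) :
    ∃ ψ₁ ψ₂ : ℝ → ℝ, IsIntervalSolution a k₁ k₂ f₁ f₂ ψ₁ ψ₂ ∧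
      ∀ φ₁ φ₂ : ℝ → ℝ, IsIntervalSolution a k₁ k₂ f₁ f₂ φ₁ φ₂ →
        (∀ x ∈ Set.Icc (0 : ℝ) a, φ₁ x = ψ₁ x) ∧
        (∀ x ∈ Set.Icc a (1 : ℝ), φ₂ x = ψ₂ x) := by
  obtain ⟨ψ₁, ψ₂, hψ⟩ := exists_isIntervalSolution ha hk₁ hk₂ hf₁ hf₂
  refine ⟨ψ₁, ψ₂, hψ, fun φ₁ φ₂ hφ => ?_⟩
  obtain ⟨h₁, h₂⟩ := hφ.eqOn ha hk₁ hk₂ hψ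
  exact ⟨fun x hx => h₁ hx, fun x hx => h₂ hx⟩
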